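/- arXiv:1901.10217 — 3 statements merged into one kernel-verified Lean document; each statement's English description precedes it below -/
import Mathlib

section
/- For l > 0, the integral of the function λ ↦ (1/(λ(1+λ²))) e^{-l/λ²} over (0,∞) equals E₁(l)·e^{l}/2, where E₁(x) = ∫_x^∞ e^{-t}/t dt is the exponential integral of order 1. -/
/-! The substitution `t = l + l / λ²` maps `(0, ∞)` decreasingly onto `(l, ∞)` and turns
`e^{-t} / t dt` into `2 e^{-l} · e^{-l/λ²} / (λ (1 + λ²)) dλ`. -/

open Real MeasureTheory Set

/-- The exponential integral of order 1. -/
noncomputable def E1 (x : ℝ) : ℝ := ∫ t in Ioi x, Real.exp (-t) / t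

section AddDivSq

variable {a : ℝ}

theorem hasDerivAt_add_div_sq {x : ℝ} (hx : x ≠ 0) :
    HasDerivAt (fun y : ℝ => a + a / y ^ 2) (-2 * a / x ^ 3) x := by
  refine (((hasDerivAt_const x a).div (hasDerivAt_pow 2 x) (pow_ne_zero 2 hx)).const_add
    a).congr_deriv ?_
  field_simp
  ring

theorem injOn_add_div_sq (ha : a ≠ 0) : InjOn (fun y : ℝ => a + a / y ^ 2) (Ioi 0) := by
  intro x hx y hy hxy
  have hsq : x ^ 2 = y ^ 2 := by
    have := add_left_cancel hxy
    field_simp at this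
    rwa [one_div, one_div, inv_inj] at this
  exact (pow_left_inj₀ hx.le hy.le two_ne_zero).mp hsq

theorem image_add_div_sq_Ioi (ha : 0 < a) : (fun y : ℝ => a + a / y ^ 2) '' Ioi 0 = Ioi a := by
  ext t
  constructor
  · rintro ⟨x, hx, rfl⟩
    exact lt_add_of_pos_right a (div_pos ha (pow_pos hx 2))
  · intro (ht : a < t)
    have hta : 0 < t - a := sub_pos.mpr ht
    refine ⟨√(a / (t - a)), sqrt_pos.mpr (div_pos ha hta), ?_⟩
    simp only [sq_sqrt (div_pos ha hta).le]
    field_simp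
    ring

theorem integral_Ioi_eq_integral_Ioi_comp_add_div_sq (ha : 0 < a) (g : ℝ → ℝ) :
    ∫ t in Ioi a, g t = ∫ x in Ioi (0 : ℝ), 2 * a / x ^ 3 * g (a + a / x ^ 2) := by
  have hderiv : ∀ x ∈ Ioi (0 : ℝ),
      HasDerivWithinAt (fun y : ℝ => a + a / y ^ 2) (-2 * a / x ^ 3) (Ioi 0) x :=
    fun x hx => (hasDerivAt_add_div_sq hx.ne').hasDerivWithinAt
  rw [← image_add_div_sq_Ioi ha,
    integral_image_eq_integral_abs_deriv_smul measurableSet_Ioi hderiv (injOn_add_div_sq ha.ne') g]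
  refine setIntegral_congr_fun measurableSet_Ioi fun x (hx : 0 < x) => ?_
  rw [smul_eq_mul, neg_mul, neg_div, abs_neg, abs_of_pos (by positivity)]

end AddDivSq

theorem integral_horseshoe_local_density (l : ℝ) (hl : 0 < l) :
    ∫ lam in Ioi (0 : ℝ), Real.exp (-l / lam ^ 2) / (lam * (1 + lam ^ 2)) =
      E1 l * Real.exp l / 2 := by
  have hE1 : E1 l = 2 * Real.exp (-l) *
      ∫ lam in Ioi (0 : ℝ), Real.exp (-l / lam ^ 2) / (lam * (1 + lam ^ 2)) := by
    rw [E1, integral_Ioi_eq_integral_Ioi_comp_add_div_sq hl, ← integral_const_mul]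
    refine setIntegral_congr_fun measurableSet_Ioi fun x (hx : 0 < x) => ?_
    rw [neg_add, Real.exp_add, neg_div]
    field_simp
    ring
  rw [hE1, Real.exp_neg]
  field_simp
end

section
/- Let l > 0 and let λ be a random variable on (0,∞) with density proportional to λ ↦ e^{-l/λ²}/(λ(1+λ²)). Then the expectation of z = λ^{-2} equals 1/(l·e^{l}·E₁(l)) − 1, where E₁ is the exponential integral of order 1. -/
/-! Substituting `u = λ⁻²` turns `fl l λ dλ` into `½ e^{-lu}/(1+u) du`, and `t = l(1+u)` shows
`∫₀^∞ e^{-lu}/(1+u) du = e^l E₁(l)`. Since `u/(1+u) = 1 - 1/(1+u)`, the numerator becomes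
`½ (1/l - e^l E₁(l))`. -/

open Real MeasureTheory Set

/-- Unnormalized density of λ. -/
noncomputable def fl (l lam : ℝ) : ℝ :=
  Real.exp (-l / lam ^ 2) / (lam * (1 + lam ^ 2))

theorem integral_comp_add_right_Ioi {E : Type*} [NormedAddCommGroup E] [NormedSpace ℝ E]
    (g : ℝ → E) (a c : ℝ) :
    ∫ x in Ioi a, g (x + c) = ∫ x in Ioi (a + c), g x := by
  simpa using (measurePreserving_add_right volume c).setIntegral_preimage_emb
    (measurableEmbedding_addRight c) g (Ioi (a + c))

theorem fl_eq_zpow_mul {l x : ℝ} (hx : 0 < x) :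
    fl l x = x ^ (-3 : ℤ) * (exp (-(l * x ^ (-2 : ℤ))) / (1 + x ^ (-2 : ℤ))) := by
  simp only [fl, zpow_neg, neg_div, ← div_eq_mul_inv]
  field_simp
  ring

theorem integral_comp_inv_sq_mul_fl (l : ℝ) (φ : ℝ → ℝ) :
    ∫ x in Ioi 0, φ (x ^ (-2 : ℤ)) * fl l x =
      (∫ u in Ioi 0, φ u * (exp (-(l * u)) / (1 + u))) / 2 := by
  rw [← integral_comp_rpow_Ioi (fun u => φ u * (exp (-(l * u)) / (1 + u)))
    (show (-2 : ℝ) ≠ 0 by norm_num), ← integral_div]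
  refine setIntegral_congr_fun measurableSet_Ioi fun x hx => ?_
  have h3 : x ^ ((-2 : ℝ) - 1) = x ^ (-3 : ℤ) := by norm_num [← rpow_intCast]
  have h2 : x ^ (-2 : ℝ) = x ^ (-2 : ℤ) := by norm_num [← rpow_intCast]
  rw [fl_eq_zpow_mul hx, h3, h2, smul_eq_mul, abs_neg, abs_two]
  ring

theorem integrableOn_exp_neg_mul_div_one_add {l : ℝ} (hl : 0 < l) :
    IntegrableOn (fun u => exp (-(l * u)) / (1 + u)) (Ioi 0) := by
  refine (exp_neg_integrableOn_Ioi 0 hl).mono'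
    (by fun_prop : Measurable _).aestronglyMeasurable ?_
  filter_upwards [ae_restrict_mem measurableSet_Ioi] with u (hu : 0 < u)
  rw [norm_div, norm_of_nonneg (exp_pos _).le, norm_of_nonneg (by linarith), neg_mul]
  exact div_le_self (exp_pos _).le (by linarith)

theorem integral_exp_neg_mul_div_one_add {l : ℝ} (hl : 0 < l) :
    ∫ u in Ioi 0, exp (-(l * u)) / (1 + u) = exp l * E1 l := by
  have hE1 : E1 l = l * ∫ u in Ioi 0, exp (-(l * (u + 1))) / (l * (u + 1)) := by
    rw [E1, integral_comp_add_right_Ioi (fun v => exp (-(l * v)) / (l * v)), zero_add,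
      ← smul_eq_mul, integral_comp_mul_left_Ioi' (fun t => exp (-t) / t) 1 hl, mul_one]
  rw [hE1, ← mul_assoc, ← integral_const_mul]
  refine setIntegral_congr_fun measurableSet_Ioi fun u (hu : 0 < u) => ?_
  rw [mul_add, mul_one, neg_add, exp_add]
  field_simp
  rw [mul_assoc, ← exp_add, add_neg_cancel, exp_zero]
  ring

theorem integral_mul_exp_neg_mul_div_one_add {l : ℝ} (hl : 0 < l) :
    ∫ u in Ioi 0, u * (exp (-(l * u)) / (1 + u)) = 1 / l - exp l * E1 l := by
  have hsplit : ∀ u ∈ Ioi (0 : ℝ),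
      u * (exp (-(l * u)) / (1 + u)) = exp (-l * u) - exp (-(l * u)) / (1 + u) := by
    intro u (hu : 0 < u)
    rw [neg_mul]
    field_simp
    ring
  rw [setIntegral_congr_fun measurableSet_Ioi hsplit,
    integral_sub (integrableOn_exp_mul_Ioi (neg_neg_of_pos hl) 0)
      (integrableOn_exp_neg_mul_div_one_add hl),
    integral_exp_mul_Ioi (neg_neg_of_pos hl), integral_exp_neg_mul_div_one_add hl,
    mul_zero, exp_zero]
  field_simp

theorem E1_pos {l : ℝ} (hl : 0 < l) : 0 < E1 l := by
  suffices 0 < exp l * E1 l from pos_of_mul_pos_right this (exp_pos l).le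
  rw [← integral_exp_neg_mul_div_one_add hl, setIntegral_pos_iff_support_of_nonneg_ae
    ?_ (integrableOn_exp_neg_mul_div_one_add hl)]
  · refine Measure.measure_Ioi_pos _ 0 |>.trans_le (measure_mono fun u (hu : 0 < u) => ⟨?_, hu⟩)
    exact (div_pos (exp_pos _) (by linarith)).ne'
  · filter_upwards [ae_restrict_mem measurableSet_Ioi] with u (hu : 0 < u)
    positivity

/-- The expectation of `z = λ⁻²` under the density proportional to
`λ ↦ exp (-l/λ²)/(λ(1+λ²))` on `(0,∞)` equals `1/(l e^l E₁(l)) - 1`. -/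
theorem expectation_inv_sq_horseshoe_local (l : ℝ) (hl : 0 < l) :
    (∫ lam in Ioi (0 : ℝ), lam ^ (-2 : ℤ) * fl l lam) /
      (∫ lam in Ioi (0 : ℝ), fl l lam) =
      1 / (l * Real.exp l * E1 l) - 1 := by
  have hZ := integral_comp_inv_sq_mul_fl l fun _ => 1
  have hN := integral_comp_inv_sq_mul_fl l id
  simp only [one_mul, id] at hZ hN
  rw [hZ, hN, integral_exp_neg_mul_div_one_add hl, integral_mul_exp_neg_mul_div_one_add hl]
  have hE1 := (E1_pos hl).ne'
  field_simp
end

section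
/- The horseshoe prior density π_τ(β) = ∫_0^∞ φ(β; 0, τ²λ²) · (2/(π(1+λ²))) dλ, where φ(·;0,v) is the normal density with variance v, satisfies π_τ(β) → ∞ as β → 0; that is, the horseshoe density has an infinite spike at zero. -/
open Real MeasureTheory Set Filter Topology

/-!
For `|β| / τ ≤ λ ≤ 1` the Gaussian factor is at least `e^{-1/2} / (√(2π) τ λ)` and the
half-Cauchy factor at least `1 / π`, so integrating `λ⁻¹` over `[|β| / τ, 1]` gives
`π_τ(β) ≥ c log (τ / |β|)`, which tends to `∞`. For `β ≠ 0` the integral is a genuine one: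
`λ⁻¹ exp (-b / λ²)` is bounded, so the integrand is dominated by a multiple of the
half-Cauchy density.
-/

/-- The horseshoe prior density with scale `τ`. -/
noncomputable def horseshoeDensity (τ β : ℝ) : ℝ :=
  ∫ lam in Ioi (0 : ℝ),
    (1 / Real.sqrt (2 * Real.pi * (τ ^ 2 * lam ^ 2))) *
      Real.exp (-β ^ 2 / (2 * (τ ^ 2 * lam ^ 2))) * (2 / (Real.pi * (1 + lam ^ 2)))

lemma inv_mul_exp_neg_div_sq_le {b : ℝ} (hb : 0 < b) (x : ℝ) :
    x⁻¹ * exp (-b / x ^ 2) ≤ 1 + b⁻¹ := by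
  -- `exp (b / x²) ≥ 1 + b / x²`, and `x⁻¹ ≤ 1 + x⁻²`
  rw [neg_div, exp_neg, ← div_eq_mul_inv, div_le_iff₀ (exp_pos _), div_eq_mul_inv, ← inv_pow]
  have hexp := add_one_le_exp (b * x⁻¹ ^ 2)
  have hbb : b⁻¹ * b = 1 := inv_mul_cancel₀ hb.ne'
  have hbinv : 0 < b⁻¹ := inv_pos.2 hb
  nlinarith [mul_le_mul_of_nonneg_left hexp (by positivity : (0 : ℝ) ≤ 1 + b⁻¹),
    sq_nonneg (x⁻¹ - 1), congrArg (· * x⁻¹ ^ 2) hbb]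

noncomputable def horseshoeIntegrand (τ β lam : ℝ) : ℝ :=
  1 / √(2 * π * (τ ^ 2 * lam ^ 2)) * exp (-β ^ 2 / (2 * (τ ^ 2 * lam ^ 2))) *
    (2 / (π * (1 + lam ^ 2)))

lemma horseshoeIntegrand_nonneg (τ β lam : ℝ) : 0 ≤ horseshoeIntegrand τ β lam := by
  unfold horseshoeIntegrand; positivity

lemma horseshoeIntegrand_eq {τ lam : ℝ} (hτ : 0 < τ) (hlam : 0 < lam) (β : ℝ) :
    horseshoeIntegrand τ β lam =
      2 / (√(2 * π) * τ * π) * (lam⁻¹ * exp (-(β ^ 2 / (2 * τ ^ 2)) / lam ^ 2)) *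
        (1 + lam ^ 2)⁻¹ := by
  have hsqrt : √(2 * π * (τ ^ 2 * lam ^ 2)) = √(2 * π) * (τ * lam) := by
    rw [← mul_pow, sqrt_mul (by positivity), sqrt_sq (by positivity)]
  have hπ : √(2 * π) ≠ 0 := by positivity
  rw [horseshoeIntegrand, hsqrt]
  field_simp

lemma integrableOn_horseshoeIntegrand {τ β : ℝ} (hτ : 0 < τ) (hβ : β ≠ 0) :
    IntegrableOn (horseshoeIntegrand τ β) (Ioi 0) := by
  set b := β ^ 2 / (2 * τ ^ 2)
  have hb : 0 < b := by positivity
  refine Integrable.mono' (integrable_inv_one_add_sq.const_mul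
      (2 / (√(2 * π) * τ * π) * (1 + b⁻¹))).integrableOn
    (by unfold horseshoeIntegrand; fun_prop) ?_
  filter_upwards [ae_restrict_mem measurableSet_Ioi] with lam hlam
  rw [norm_of_nonneg (horseshoeIntegrand_nonneg τ β lam), horseshoeIntegrand_eq hτ hlam]
  gcongr
  exact inv_mul_exp_neg_div_sq_le hb lam

lemma inv_le_horseshoeIntegrand {τ β lam : ℝ} (hτ : 0 < τ) (hlam0 : 0 < lam)
    (hβlam : |β| / τ ≤ lam) (hlam : lam ≤ 1) :
    exp (-(1 / 2)) / (√(2 * π) * τ * π) * lam⁻¹ ≤ horseshoeIntegrand τ β lam := by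
  have hexp : exp (-(1 / 2)) ≤ exp (-(β ^ 2 / (2 * τ ^ 2)) / lam ^ 2) := by
    rw [exp_le_exp, neg_div, neg_le_neg_iff, div_le_iff₀ (by positivity),
      div_le_iff₀ (by positivity)]
    rw [div_le_iff₀ hτ] at hβlam
    nlinarith [sq_abs β, abs_nonneg β]
  have hcauchy : (2 : ℝ)⁻¹ ≤ (1 + lam ^ 2)⁻¹ := by
    gcongr; nlinarith
  rw [horseshoeIntegrand_eq hτ hlam0]
  calc exp (-(1 / 2)) / (√(2 * π) * τ * π) * lam⁻¹
      = 2 / (√(2 * π) * τ * π) * (lam⁻¹ * exp (-(1 / 2))) * 2⁻¹ := by ring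
    _ ≤ _ := by gcongr

lemma mul_log_le_horseshoeDensity {τ β : ℝ} (hτ : 0 < τ) (hβ : β ≠ 0) :
    exp (-(1 / 2)) / (√(2 * π) * τ * π) * log (τ / |β|) ≤ horseshoeDensity τ β := by
  set c := exp (-(1 / 2)) / (√(2 * π) * τ * π)
  rcases le_or_gt τ |β| with hτβ | hβτ
  · have hlog : log (τ / |β|) ≤ 0 :=
      log_nonpos (by positivity) ((div_le_one (abs_pos.2 hβ)).2 hτβ)
    exact (mul_nonpos_of_nonneg_of_nonpos (by positivity) hlog).trans
      (setIntegral_nonneg measurableSet_Ioi fun lam _ => horseshoeIntegrand_nonneg τ β lam)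
  set a := |β| / τ
  have ha : 0 < a := by positivity
  have ha1 : a ≤ 1 := (div_le_one hτ).2 hβτ.le
  have hIoc : Ioc a 1 ⊆ Ioi 0 := fun lam hlam => ha.trans hlam.1
  have hint := integrableOn_horseshoeIntegrand hτ hβ
  calc c * log (τ / |β|) = ∫ lam in a..1, c * lam⁻¹ := by
        rw [intervalIntegral.integral_const_mul, integral_inv_of_pos ha one_pos, one_div_div]
    _ ≤ ∫ lam in Ioc a 1, horseshoeIntegrand τ β lam := by
        rw [intervalIntegral.integral_of_le ha1]
        refine setIntegral_mono_on ?_ (hint.mono_set hIoc) measurableSet_Ioc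
          fun lam hlam => inv_le_horseshoeIntegrand hτ (ha.trans hlam.1) hlam.1.le hlam.2
        have hcont : ContinuousOn (fun lam => c * lam⁻¹) (Icc a 1) :=
          continuousOn_const.mul (continuousOn_inv₀.mono fun x hx => (ha.trans_le hx.1).ne')
        exact hcont.integrableOn_Icc.mono_set Ioc_subset_Icc_self
    _ ≤ ∫ lam in Ioi 0, horseshoeIntegrand τ β lam :=
        setIntegral_mono_set hint (.of_forall (horseshoeIntegrand_nonneg τ β)) hIoc.eventuallyLE
    _ = horseshoeDensity τ β := rfl

/-- The horseshoe density has an infinite spike at zero: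
`π_τ(β) → ∞` as `β → 0`. -/
theorem horseshoeDensity_tendsto_atTop (τ : ℝ) (hτ : 0 < τ) :
    Tendsto (horseshoeDensity τ) (𝓝[≠] (0 : ℝ)) atTop := by
  have hlog : Tendsto (fun β : ℝ => exp (-(1 / 2)) / (√(2 * π) * τ * π) * log (τ / |β|))
      (𝓝[≠] 0) atTop := by
    refine (tendsto_log_atTop.comp ?_).const_mul_atTop (by positivity)
    have habs : Tendsto (fun β : ℝ => |β|) (𝓝[≠] 0) (𝓝[>] 0) := tendsto_norm_nhdsNE_zero
    simpa only [div_eq_mul_inv, Function.comp_def] using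
      (tendsto_inv_nhdsGT_zero.comp habs).const_mul_atTop hτ
  refine tendsto_atTop_mono' _ ?_ hlog
  filter_upwards [self_mem_nhdsWithin] with β hβ
  exact mul_log_le_horseshoeDensity hτ hβ
end
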